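/- Let L be a finite lattice, L̃ its atomistic extension obtained by inserting for each non-atom join-irreducible p ∈ H(L) = J(L)\A(L) a new element w_p with 0 ≺ w_p ≺ p, and let T be a t-norm on C(L̃) with generated t-norm T̄ on L̃. Then the restriction T̄|_L is a t-norm on L if and only if T satisfies: for every p ∈ H(L) with p ≠ 1, if T(w_p, w_p) ≠ 0 then there exists an atom u of L̃ with u ≤ p, u ≠ w_p, and T(u,u) ≠ 0. -/

import Mathlib

def IsTnorm {L : Type*} [PartialOrder L] [BoundedOrder L] (T : L → L → L) : Prop :=
  (∀ x : L, Monotone (T x)) ∧ (∀ x y : L, T x y = T y x) ∧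
  (∀ x y z : L, T x (T y z) = T (T x y) z) ∧ (∀ x : L, T x ⊤ = x)

open Classical in
noncomputable def TD {L : Type*} [Lattice L] [BoundedOrder L] (x y : L) : L :=
  if x = ⊤ ∨ y = ⊤ then x ⊓ y else ⊥

def CL (L : Type*) [CompleteLattice L] : Set L := {x | IsAtom x ∨ x = ⊥ ∨ x = ⊤}

def kappa {L : Type*} [CompleteLattice L] (x : L) : Set L :=
  {u | u ∈ CL L ∧ u ≠ ⊥ ∧ u ≤ x}

noncomputable def Tbar {L : Type*} [CompleteLattice L] (T : L → L → L) (x y : L) : L :=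
  ⨆ u ∈ kappa x, ⨆ v ∈ kappa y, T u v

def IsTnormOn {L : Type*} [PartialOrder L] [OrderTop L] (C : Set L) (T : L → L → L) : Prop :=
  (∀ x ∈ C, ∀ y ∈ C, T x y ∈ C) ∧
  (∀ x ∈ C, ∀ y ∈ C, ∀ z ∈ C, y ≤ z → T x y ≤ T x z) ∧
  (∀ x ∈ C, ∀ y ∈ C, T x y = T y x) ∧
  (∀ x ∈ C, ∀ y ∈ C, ∀ z ∈ C, T x (T y z) = T (T x y) z) ∧
  (∀ x ∈ C, T x ⊤ = x)

open Classical in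
noncomputable def Talpha {L : Type*} [CompleteLattice L] (α : Set L) (x y : L) : L :=
  if x = ⊤ ∨ y = ⊤ then x ⊓ y else if x = y ∧ x ∈ α then x else ⊥

def JIrrOn {M : Type*} [CompleteLattice M] (Ls : Set M) (p : M) : Prop :=
  p ∈ Ls ∧ p ≠ ⊥ ∧ ∀ x ∈ Ls, ∀ y ∈ Ls, p = x ⊔ y → p = x ∨ p = y

def AtomOn {M : Type*} [CompleteLattice M] (Ls : Set M) (p : M) : Prop :=
  p ∈ Ls ∧ ⊥ < p ∧ ∀ x ∈ Ls, x < p → x = ⊥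

def HOn {M : Type*} [CompleteLattice M] (Ls : Set M) : Set M :=
  {p | JIrrOn Ls p ∧ ¬ AtomOn Ls p}

/-!
For atoms `u ≠ v` of `L̃` a t-norm `T` on `C(L̃)` gives `T(u,v) ≤ u ⊓ v = 0`, and `T(u,u) ∈ {0, u}`.
Hence, away from `⊤`, `T̄(x,y)` is the join of the atoms `u ≤ x ⊓ y` with `T(u,u) ≠ 0` (the set `α`
of the paper). This description makes `T̄` a t-norm on all of `L̃`, so its restriction to `L` is a
t-norm exactly when `L` is closed under `T̄`. Every element outside `L` is an atom `w_p`, and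
`T̄(x,y) = w_p` for `x, y ∈ L` means that `w_p` is the only atom of `α` below `z = x ⊓ y ∈ L`.
Then `p ≤ z`, since `w_p ≺ p` and `z ⊓ p ∈ L` while `w_p ∉ L`; so `w_p` is also the only atom of
`α` below `p`, which the condition forbids. Conversely, if `w_p` is the only atom of `α` below
`p ≠ ⊤`, then `T̄(p,p) = w_p ∉ L`.
-/

namespace IsTnormOn

variable {L : Type*} [PartialOrder L] [OrderTop L] {C : Set L} {T : L → L → L}

theorem apply_le_left (hT : IsTnormOn C T) (htop : ⊤ ∈ C) {x y : L} (hx : x ∈ C) (hy : y ∈ C) :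
    T x y ≤ x := by
  simpa only [hT.2.2.2.2 x hx] using hT.2.1 x hx y hy ⊤ htop le_top

theorem apply_le_right (hT : IsTnormOn C T) (htop : ⊤ ∈ C) {x y : L} (hx : x ∈ C)
    (hy : y ∈ C) : T x y ≤ y :=
  hT.2.2.1 x hx y hy ▸ hT.apply_le_left htop hy hx

end IsTnormOn

theorem isTnormOn_iff_forall_mem_of_isTnorm {L : Type*} [PartialOrder L] [BoundedOrder L]
    {C : Set L} {T : L → L → L} (hT : IsTnorm T) :
    IsTnormOn C T ↔ ∀ x ∈ C, ∀ y ∈ C, T x y ∈ C :=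
  ⟨fun h => h.1, fun h => ⟨h, fun x _ _ _ _ _ hyz => hT.1 x hyz, fun x _ y _ => hT.2.1 x y,
    fun x _ y _ z _ => hT.2.2.1 x y z, fun x _ => hT.2.2.2 x⟩⟩

section Atoms

variable {M : Type*} [CompleteLattice M]

theorem top_mem_CL : (⊤ : M) ∈ CL M := Or.inr (Or.inr rfl)

theorem IsAtom.mem_CL {u : M} (hu : IsAtom u) : u ∈ CL M := Or.inl hu

theorem IsAtom.mem_kappa {u x : M} (hu : IsAtom u) (hux : u ≤ x) : u ∈ kappa x :=
  ⟨hu.mem_CL, hu.1, hux⟩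

theorem kappa_of_ne_top {x : M} (hx : x ≠ ⊤) : kappa x = {u : M | IsAtom u ∧ u ≤ x} := by
  ext u
  constructor
  · rintro ⟨hu | rfl | rfl, hub, hux⟩
    · exact ⟨hu, hux⟩
    · exact absurd rfl hub
    · exact absurd (top_unique hux) hx
  · rintro ⟨hu, hux⟩
    exact hu.mem_kappa hux

variable {T : M → M → M}

theorem IsTnormOn.apply_self_eq_of_isAtom (hT : IsTnormOn (CL M) T) {u : M} (hu : IsAtom u)
    (hTu : T u u ≠ ⊥) : T u u = u :=
  ((hT.apply_le_left top_mem_CL hu.mem_CL hu.mem_CL).lt_or_eq.resolve_left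
    fun h => hTu (hu.2 _ h))

theorem IsTnormOn.apply_eq_bot_of_isAtom_of_ne (hT : IsTnormOn (CL M) T) {u v : M}
    (hu : IsAtom u) (hv : IsAtom v) (huv : u ≠ v) : T u v = ⊥ :=
  le_bot_iff.mp <| (le_inf (hT.apply_le_left top_mem_CL hu.mem_CL hv.mem_CL)
    (hT.apply_le_right top_mem_CL hu.mem_CL hv.mem_CL)).trans (hu.disjoint_of_ne hv huv).le_bot

def alphaBelow (T : M → M → M) (z : M) : Set M := {u | IsAtom u ∧ u ≤ z ∧ T u u ≠ ⊥}

noncomputable def alphaSup (T : M → M → M) (z : M) : M := sSup (alphaBelow T z)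

theorem alphaSup_le (z : M) : alphaSup T z ≤ z :=
  sSup_le fun _ hu => hu.2.1

theorem alphaSup_mono {z z' : M} (h : z ≤ z') : alphaSup T z ≤ alphaSup T z' :=
  sSup_le fun _ ⟨hu, huz, hTu⟩ => le_sSup ⟨hu, huz.trans h, hTu⟩

theorem le_alphaSup {u z : M} (hu : IsAtom u) (huz : u ≤ z) (hTu : T u u ≠ ⊥) :
    u ≤ alphaSup T z :=
  le_sSup ⟨hu, huz, hTu⟩

theorem alphaSup_inf_alphaSup (x z : M) : alphaSup T (x ⊓ alphaSup T z) = alphaSup T (x ⊓ z) :=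
  le_antisymm (alphaSup_mono (inf_le_inf_left x (alphaSup_le z))) <|
    sSup_le fun _ ⟨hu, huz, hTu⟩ =>
      le_alphaSup hu (le_inf (huz.trans inf_le_left) (le_alphaSup hu (huz.trans inf_le_right) hTu))
        hTu

theorem alphaSup_alphaSup_inf (x z : M) : alphaSup T (alphaSup T x ⊓ z) = alphaSup T (x ⊓ z) := by
  rw [inf_comm, alphaSup_inf_alphaSup, inf_comm]

theorem alphaSup_eq_iff_alphaBelow_eq_singleton {a z : M} (ha : IsAtom a) :
    alphaSup T z = a ↔ alphaBelow T z = {a} := by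
  refine ⟨fun h => ?_, fun h => by rw [alphaSup, h, sSup_singleton]⟩
  have hbelow : ∀ u ∈ alphaBelow T z, u = a := fun u hu =>
    ((le_sSup hu).trans_eq h).lt_or_eq.resolve_left fun hlt => hu.1.1 (ha.2 u hlt)
  obtain ⟨u, hu⟩ := (alphaBelow T z).eq_empty_or_nonempty.resolve_left fun he =>
    ha.1 (by rw [← h, alphaSup, he, sSup_empty])
  exact Set.eq_singleton_iff_unique_mem.mpr ⟨hbelow u hu ▸ hu, hbelow⟩

end Atoms

section Tbar

variable {M : Type*} [CompleteLattice M] {T : M → M → M}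

theorem Tbar_mono (x : M) {y z : M} (h : y ≤ z) : Tbar T x y ≤ Tbar T x z :=
  iSup₂_le fun u hu => iSup₂_le fun v hv =>
    le_iSup₂_of_le u hu (le_iSup₂_of_le v ⟨hv.1, hv.2.1, hv.2.2.trans h⟩ le_rfl)

theorem Tbar_comm (hcomm : ∀ u ∈ CL M, ∀ v ∈ CL M, T u v = T v u) (x y : M) :
    Tbar T x y = Tbar T y x := by
  have key : ∀ a b : M, Tbar T a b ≤ Tbar T b a := fun a b =>
    iSup₂_le fun u hu => iSup₂_le fun v hv =>
      (hcomm u hu.1 v hv.1).le.trans (le_iSup₂_of_le v hv (le_iSup₂_of_le u hu le_rfl))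
  exact le_antisymm (key x y) (key y x)

variable (hT : IsTnormOn (CL M) T)
include hT

theorem Tbar_le_inf (x y : M) : Tbar T x y ≤ x ⊓ y :=
  iSup₂_le fun _ hu => iSup₂_le fun _ hv =>
    le_inf ((hT.apply_le_left top_mem_CL hu.1 hv.1).trans hu.2.2)
      ((hT.apply_le_right top_mem_CL hu.1 hv.1).trans hv.2.2)

theorem Tbar_ne_top_of_ne_top_left {x : M} (hx : x ≠ ⊤) (y : M) : Tbar T x y ≠ ⊤ :=
  fun h => hx (top_unique (h ▸ (Tbar_le_inf hT x y).trans inf_le_left))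

theorem Tbar_eq_alphaSup {x y : M} (hx : x ≠ ⊤) (hy : y ≠ ⊤) :
    Tbar T x y = alphaSup T (x ⊓ y) := by
  apply le_antisymm
  · refine iSup₂_le fun u hu => iSup₂_le fun v hv => ?_
    rw [kappa_of_ne_top hx] at hu
    rw [kappa_of_ne_top hy] at hv
    by_cases hTuv : T u v = ⊥
    · exact hTuv ▸ bot_le
    obtain rfl : u = v := by_contra fun huv => hTuv (hT.apply_eq_bot_of_isAtom_of_ne hu.1 hv.1 huv)
    exact (hT.apply_le_left top_mem_CL hu.1.mem_CL hu.1.mem_CL).trans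
      (le_alphaSup hu.1 (le_inf hu.2 hv.2) hTuv)
  · refine sSup_le fun u ⟨hu, huxy, hTu⟩ => ?_
    calc u = T u u := (hT.apply_self_eq_of_isAtom hu hTu).symm
      _ ≤ Tbar T x y := le_iSup₂_of_le u (hu.mem_kappa (huxy.trans inf_le_left))
          (le_iSup₂_of_le u (hu.mem_kappa (huxy.trans inf_le_right)) le_rfl)

variable [IsAtomistic M]

theorem Tbar_top_right (x : M) : Tbar T x ⊤ = x := by
  refine le_antisymm ((Tbar_le_inf hT x ⊤).trans inf_le_left) ?_
  conv_lhs => rw [← sSup_atoms_le_eq x]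
  refine sSup_le fun a ⟨ha, hax⟩ => ?_
  calc a = T a ⊤ := (hT.2.2.2.2 a ha.mem_CL).symm
    _ ≤ Tbar T x ⊤ := le_iSup₂_of_le a (ha.mem_kappa hax)
        (le_iSup₂_of_le ⊤ ⟨top_mem_CL, (ha.1 <| le_bot_iff.mp <| · ▸ le_top), le_rfl⟩ le_rfl)

theorem Tbar_top_left (y : M) : Tbar T ⊤ y = y := by
  rw [Tbar_comm hT.2.2.1, Tbar_top_right hT]

theorem Tbar_assoc (x y z : M) : Tbar T x (Tbar T y z) = Tbar T (Tbar T x y) z := by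
  rcases eq_or_ne y ⊤ with rfl | hy
  · rw [Tbar_top_left hT, Tbar_top_right hT]
  rcases eq_or_ne x ⊤ with rfl | hx
  · rw [Tbar_top_left hT, Tbar_top_left hT]
  rcases eq_or_ne z ⊤ with rfl | hz
  · rw [Tbar_top_right hT, Tbar_top_right hT]
  rw [Tbar_eq_alphaSup hT hx (Tbar_ne_top_of_ne_top_left hT hy z), Tbar_eq_alphaSup hT hy hz,
    Tbar_eq_alphaSup hT (Tbar_ne_top_of_ne_top_left hT hx y) hz, Tbar_eq_alphaSup hT hx hy,
    alphaSup_inf_alphaSup, alphaSup_alphaSup_inf, inf_assoc]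

theorem isTnorm_Tbar : IsTnorm (Tbar T) :=
  ⟨fun x _ _ h => Tbar_mono x h, Tbar_comm hT.2.2.1, Tbar_assoc hT, Tbar_top_right hT⟩

end Tbar

section Extension

variable {M : Type*} [CompleteLattice M] {Ls : Set M}

theorem le_of_covBy_of_notMem (hmeet : ∀ x ∈ Ls, ∀ y ∈ Ls, x ⊓ y ∈ Ls) {a q z : M}
    (hz : z ∈ Ls) (hq : q ∈ Ls) (haq : a ⋖ q) (ha : a ∉ Ls) (haz : a ≤ z) : q ≤ z := by
  rcases haq.eq_or_eq (le_inf haz haq.le) inf_le_right with h | h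
  · exact absurd (h ▸ hmeet z hz q hq) ha
  · exact h ▸ inf_le_left

theorem alphaSup_mem {T : M → M → M} (hmeet : ∀ x ∈ Ls, ∀ y ∈ Ls, x ⊓ y ∈ Ls) (w : M → M)
    (hw : ∀ p ∈ HOn Ls, (⊥ ⋖ w p) ∧ (w p ⋖ p) ∧ w p ∉ Ls)
    (hall : ∀ x : M, x ∈ Ls ∨ ∃ p ∈ HOn Ls, x = w p)
    (hcond : ∀ p ∈ HOn Ls, p ≠ ⊤ → T (w p) (w p) ≠ ⊥ →
      ∃ u : M, IsAtom u ∧ u ≤ p ∧ u ≠ w p ∧ T u u ≠ ⊥)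
    {z : M} (hz : z ∈ Ls) (hztop : z ≠ ⊤) : alphaSup T z ∈ Ls := by
  refine (hall _).resolve_right fun ⟨q, hq, hzq⟩ => ?_
  obtain ⟨hwq_bot, hwq, hwq_not⟩ := hw q hq
  have hbelow := (alphaSup_eq_iff_alphaBelow_eq_singleton (bot_covBy_iff.mp hwq_bot)).mp hzq
  obtain ⟨-, hwqz, hTwq⟩ : w q ∈ alphaBelow T z := hbelow.symm ▸ Set.mem_singleton _
  have hqz : q ≤ z := le_of_covBy_of_notMem hmeet hz hq.1.1 hwq hwq_not hwqz
  obtain ⟨u, hu, huq, huw, hTu⟩ := hcond q hq (ne_top_of_le_ne_top hztop hqz) hTwq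
  have hu_mem : u ∈ alphaBelow T z := ⟨hu, huq.trans hqz, hTu⟩
  rw [hbelow] at hu_mem
  exact huw hu_mem

end Extension

theorem stmt18_general {M : Type*} [CompleteLattice M] [IsAtomistic M]
    (Ls : Set M)
    (hmeet : ∀ x ∈ Ls, ∀ y ∈ Ls, x ⊓ y ∈ Ls)
    (w : M → M)
    (hw : ∀ p ∈ HOn Ls, (⊥ ⋖ w p) ∧ (w p ⋖ p) ∧ w p ∉ Ls)
    (hall : ∀ x : M, x ∈ Ls ∨ ∃ p ∈ HOn Ls, x = w p)
    (T : M → M → M) (hT : IsTnormOn (CL M) T) :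
    IsTnormOn Ls (Tbar T) ↔
      ∀ p ∈ HOn Ls, p ≠ ⊤ → T (w p) (w p) ≠ ⊥ →
        ∃ u : M, IsAtom u ∧ u ≤ p ∧ u ≠ w p ∧ T u u ≠ ⊥ := by
  rw [isTnormOn_iff_forall_mem_of_isTnorm (isTnorm_Tbar hT)]
  constructor
  · intro hclosed p hp hptop hTwp
    by_contra! hcon
    obtain ⟨hwp_bot, hwp, hwp_not⟩ := hw p hp
    have hbelow : alphaBelow T p = {w p} :=
      Set.eq_singleton_iff_unique_mem.mpr
        ⟨⟨bot_covBy_iff.mp hwp_bot, hwp.le, hTwp⟩, fun u ⟨hu, hup, hTu⟩ =>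
          by_contra fun huw => hTu (hcon u hu hup huw)⟩
    have hpp := hclosed p hp.1.1 p hp.1.1
    rw [Tbar_eq_alphaSup hT hptop hptop, inf_idem,
      (alphaSup_eq_iff_alphaBelow_eq_singleton (bot_covBy_iff.mp hwp_bot)).mpr hbelow] at hpp
    exact hwp_not hpp
  · intro hcond x hx y hy
    rcases eq_or_ne x ⊤ with rfl | hxtop
    · rwa [Tbar_top_left hT]
    rcases eq_or_ne y ⊤ with rfl | hytop
    · rwa [Tbar_top_right hT]
    rw [Tbar_eq_alphaSup hT hxtop hytop]
    exact alphaSup_mem hmeet w hw hall hcond (hmeet x hx y hy)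
      (ne_top_of_le_ne_top hxtop inf_le_left)

theorem stmt18 {M : Type*} [CompleteLattice M] [Fintype M] [IsAtomistic M]
    (Ls : Set M) (hbot : ⊥ ∈ Ls) (htop : ⊤ ∈ Ls)
    (hmeet : ∀ x ∈ Ls, ∀ y ∈ Ls, x ⊓ y ∈ Ls)
    (hjoin : ∀ x ∈ Ls, ∀ y ∈ Ls, x ⊔ y ∈ Ls)
    (w : M → M)
    (hw : ∀ p ∈ HOn Ls, (⊥ ⋖ w p) ∧ (w p ⋖ p) ∧ w p ∉ Ls)
    (hwinj : ∀ p ∈ HOn Ls, ∀ q ∈ HOn Ls, w p = w q → p = q)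
    (hall : ∀ x : M, x ∈ Ls ∨ ∃ p ∈ HOn Ls, x = w p)
    (T : M → M → M) (hT : IsTnormOn (CL M) T) :
    IsTnormOn Ls (Tbar T) ↔
      ∀ p ∈ HOn Ls, p ≠ ⊤ → T (w p) (w p) ≠ ⊥ →
        ∃ u : M, IsAtom u ∧ u ≤ p ∧ u ≠ w p ∧ T u u ≠ ⊥ :=
  stmt18_general Ls hmeet w hw hall T hT
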